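/- Let the component set be partitioned into users U and resources Res, let > be a strict total order on Res, and suppose the ungranted-request relation satisfies: every ungranted request goes between a user and a resource (never user-user or resource-resource), and whenever r →• u →• r' for resources r, r' and user u, we have r > r'. Then there is no cycle of ungranted requests. -/
import Mathlib


/-- Resource-allocation soundness: if every ungranted request goes between a
user and a resource, and any resource-user-resource chain `r →• u →• r'` implies `r > r'`
for a strict order `>` on resources, then there is no cycle of ungranted requests. -/
theorem stmt_5 {V : Type*} [Fintype V] (U Res : Set V)
    (hpart : ∀ v, (v ∈ U ∨ v ∈ Res) ∧ ¬ (v ∈ U ∧ v ∈ Res))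
    (ur : V → V → Prop) (gt : V → V → Prop)
    (hirr : ∀ r ∈ Res, ¬ gt r r)
    (htrans : ∀ a ∈ Res, ∀ b ∈ Res, ∀ c ∈ Res, gt a b → gt b c → gt a c)
    (hbip : ∀ i j, ur i j → (i ∈ U ∧ j ∈ Res) ∨ (i ∈ Res ∧ j ∈ U))
    (hchain : ∀ r ∈ Res, ∀ r' ∈ Res, ∀ u ∈ U, ur r u → ur u r' → gt r r') :
    ¬ ∃ (k : ℕ) (hk : 0 < k) (c : Fin k → V),
      ∀ i : Fin k, ur (c i) (c ⟨(i.1 + 1) % k, Nat.mod_lt _ hk⟩) := by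
  rintro ⟨k, hk, c, hc⟩
  set g : ℕ → V := fun n => c ⟨n % k, Nat.mod_lt _ hk⟩ with hg
  have hedge : ∀ n : ℕ, ur (g n) (g (n + 1)) := by
    intro n
    have := hc ⟨n % k, Nat.mod_lt _ hk⟩
    simpa [hg, Nat.mod_add_mod] using this
  -- find a starting point in Res
  obtain ⟨n0, hn0⟩ : ∃ n0, g n0 ∈ Res := by
    rcases hbip _ _ (hedge 0) with ⟨_, h⟩ | ⟨h, _⟩
    · exact ⟨1, h⟩
    · exact ⟨0, h⟩
  -- step lemma: from a resource position, two steps later is a smaller resource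
  have step : ∀ n, g n ∈ Res → g (n + 2) ∈ Res ∧ gt (g n) (g (n + 2)) := by
    intro n hn
    have hU : g (n + 1) ∈ U := by
      rcases hbip _ _ (hedge n) with ⟨h1, _⟩ | ⟨_, h2⟩
      · exact absurd ⟨h1, hn⟩ (hpart (g n)).2
      · exact h2
    have hR : g (n + 2) ∈ Res := by
      rcases hbip _ _ (hedge (n + 1)) with ⟨_, h2⟩ | ⟨h1, _⟩
      · exact h2
      · exact absurd ⟨hU, h1⟩ (hpart (g (n + 1))).2
    exact ⟨hR, hchain _ hn _ hR _ hU (hedge n) (hedge (n + 1))⟩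
  have key : ∀ n, g (n0 + 2 * n) ∈ Res ∧ (0 < n → gt (g n0) (g (n0 + 2 * n))) := by
    intro n
    induction n with
    | zero => exact ⟨by simpa using hn0, by simp⟩
    | succ m ih =>
      obtain ⟨hR, hgt⟩ := ih
      obtain ⟨hR', hgt'⟩ := step _ hR
      have heq : n0 + 2 * (m + 1) = n0 + 2 * m + 2 := by ring
      rw [heq]
      refine ⟨hR', fun _ => ?_⟩
      rcases Nat.eq_zero_or_pos m with rfl | hm
      · simpa using hgt'
      · exact htrans _ hn0 _ hR _ hR' (hgt hm) hgt'
  have hcyc : g (n0 + 2 * k) = g n0 := by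
    simp [hg, Nat.add_mul_mod_self_left]
  have := (key k).2 hk
  rw [hcyc] at this
  exact hirr _ hn0 this
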